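/- For any positive integer p and any residue r with 0 ≤ r ≤ p−1, writing L_p = {x ∈ M : p divides ℓ(x)}, we have lim_{k→∞} |L_p|_{≤ pk+r} / |M|_{≤ pk+r} = 3 / (4^{r+1}(1 − 1/4^p)). -/

import Mathlib

open Filter

def FreeMagma.len {α : Type*} : FreeMagma α → ℕ
  | FreeMagma.of _ => 1
  | FreeMagma.mul x y => x.len + y.len

noncomputable def cnt {α : Type*} (X : Set (FreeMagma α)) (n : ℕ) : ℕ :=
  Nat.card {x : FreeMagma α // x ∈ X ∧ x.len = n}

noncomputable def cntLe {α : Type*} (X : Set (FreeMagma α)) (n : ℕ) : ℕ :=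
  Nat.card {x : FreeMagma α // x ∈ X ∧ x.len ≤ n}

open Finset Topology

/-!
Under the bijection with binary trees, the elements of length `m + 1` are counted by the
Catalan number `C m`, so the two counts are the partial sums `∑_{j<k} C (p j + p - 1)` and
`∑_{m<pk+r} C m`. If `b j / b (j + 1) → q` with `|q| < 1`, then `T k = (∑_{j≤k} b j) / b k`
satisfies `T (k + 1) = 1 + (b k / b (k + 1)) T k`, an eventual contraction towards the fixed
point `1 / (1 - q)`. Since `C n / C (n + 1) → 1/4`, this applies with `q = 4⁻ᵖ` to the numerator
and `q = 1/4` to the denominator, and the last terms of the two sums differ by a factor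
`C (pk - 1) / C (pk + r - 1) → 4⁻ʳ`; the limit is `4⁻ʳ · (3/4) / (1 - 4⁻ᵖ)`.
-/

theorem catalan_pos (n : ℕ) : 0 < catalan n :=
  Nat.pos_of_mul_pos_left ((succ_mul_catalan_eq_centralBinom n).symm ▸ n.centralBinom_pos)

theorem catalan_cast_ne_zero {R : Type*} [AddMonoidWithOne R] [CharZero R] (n : ℕ) :
    (catalan n : R) ≠ 0 :=
  Nat.cast_ne_zero.2 (catalan_pos n).ne'

theorem add_two_mul_catalan_succ (n : ℕ) :
    (n + 2) * catalan (n + 1) = 2 * (2 * n + 1) * catalan n := by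
  apply Nat.eq_of_mul_eq_mul_left n.succ_pos
  calc (n + 1) * ((n + 2) * catalan (n + 1)) = (n + 1) * (n + 1).centralBinom := by
        rw [← succ_mul_catalan_eq_centralBinom]
    _ = 2 * (2 * n + 1) * n.centralBinom := Nat.succ_mul_centralBinom_succ n
    _ = (n + 1) * (2 * (2 * n + 1) * catalan n) := by
        rw [← succ_mul_catalan_eq_centralBinom]; ring

theorem catalan_div_catalan_succ (n : ℕ) :
    (catalan n : ℝ) / catalan (n + 1) = 1 / 4 + 3 / 4 * (2 * n + 1 : ℝ)⁻¹ := by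
  have h : ((n : ℝ) + 2) * catalan (n + 1) = 2 * (2 * n + 1) * catalan n := by
    exact_mod_cast add_two_mul_catalan_succ n
  have := catalan_cast_ne_zero (R := ℝ) (n + 1)
  field_simp
  linear_combination -2 * h

theorem tendsto_catalan_div_catalan_succ :
    Tendsto (fun n => (catalan n : ℝ) / catalan (n + 1)) atTop (𝓝 (1 / 4)) := by
  have h : Tendsto (fun n : ℕ => (2 * n + 1 : ℝ)) atTop atTop :=
    tendsto_atTop_add_const_right _ 1
      (tendsto_natCast_atTop_atTop.const_mul_atTop two_pos)
  simpa [catalan_div_catalan_succ] using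
    (tendsto_inv_atTop_zero.comp h).const_mul (3 / 4 : ℝ) |>.const_add (1 / 4 : ℝ)

theorem tendsto_zero_of_abs_succ_le_mul_add {e δ : ℕ → ℝ} {c : ℝ} (hc0 : 0 ≤ c) (hc1 : c < 1)
    (hδ : Tendsto δ atTop (𝓝 0)) (h : ∀ᶠ k in atTop, |e (k + 1)| ≤ c * |e k| + δ k) :
    Tendsto e atTop (𝓝 0) := by
  rw [Metric.tendsto_atTop]
  intro ε hε
  have hε' : 0 < ε / 2 * (1 - c) := by nlinarith
  obtain ⟨K, hK⟩ := eventually_atTop.1 (h.and (hδ.eventually (ge_mem_nhds hε')))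
  -- Above level `ε / 2`, the excess of `|e|` decays geometrically from index `K` on.
  set g : ℕ → ℝ := fun n => max (|e (K + n)| - ε / 2) 0
  have hg : ∀ n, g n ≤ c ^ n * g 0 := fun n => le_geom hc0 n fun k _ => by
    obtain ⟨hrec, hδk⟩ := hK (K + k) (Nat.le_add_right K k)
    refine max_le ?_ (mul_nonneg hc0 (le_max_right _ _))
    calc |e (K + k + 1)| - ε / 2 ≤ c * (|e (K + k)| - ε / 2) := by linarith
      _ ≤ c * g k := mul_le_mul_of_nonneg_left (le_max_left _ _) hc0
  have hgeom : Tendsto (fun n => c ^ n * g 0) atTop (𝓝 0) := by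
    simpa using (tendsto_pow_atTop_nhds_zero_of_lt_one hc0 hc1).mul_const (g 0)
  obtain ⟨N, hN⟩ := eventually_atTop.1 (hgeom.eventually (gt_mem_nhds (half_pos hε)))
  refine ⟨K + N, fun n hn => ?_⟩
  obtain ⟨m, rfl⟩ := Nat.exists_eq_add_of_le (le_trans (Nat.le_add_right K N) hn)
  have := (le_max_left _ _).trans_lt ((hg m).trans_lt (hN m (by omega)))
  rw [Real.dist_eq, sub_zero]
  linarith

theorem tendsto_sum_range_succ_div_self {b : ℕ → ℝ} {q : ℝ} (hb : ∀ k, b k ≠ 0) (hq : |q| < 1)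
    (h : Tendsto (fun k => b k / b (k + 1)) atTop (𝓝 q)) :
    Tendsto (fun k => (∑ j ∈ range (k + 1), b j) / b k) atTop (𝓝 (1 - q)⁻¹) := by
  set L := (1 - q)⁻¹
  set T := fun k => (∑ j ∈ range (k + 1), b j) / b k
  have hL : L * (1 - q) = 1 := inv_mul_cancel₀ (by linarith [le_abs_self q])
  clear_value L
  -- `T (k + 1) = 1 + (b k / b (k + 1)) * T k`, and `L` is the fixed point of `x ↦ 1 + q x`.
  have hrec : ∀ k, T (k + 1) - L = b k / b (k + 1) * (T k - L) + (b k / b (k + 1) - q) * L := by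
    intro k
    simp only [T, sum_range_succ _ (k + 1)]
    field_simp [hb k, hb (k + 1)]
    linear_combination -b (k + 1) * hL
  obtain ⟨c, hqc, hc1⟩ := exists_between hq
  have hc : ∀ᶠ k in atTop, |b k / b (k + 1)| ≤ c := h.abs.eventually (ge_mem_nhds hqc)
  have hδ : Tendsto (fun k => |b k / b (k + 1) - q| * |L|) atTop (𝓝 0) := by
    simpa using ((tendsto_sub_nhds_zero_iff.2 h).abs.mul_const |L|)
  have := tendsto_zero_of_abs_succ_le_mul_add (e := fun k => T k - L)
    ((abs_nonneg q).trans hqc.le) hc1 hδ <| hc.mono fun k hk => by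
      rw [hrec k]
      calc _ ≤ |b k / b (k + 1)| * |T k - L| + |b k / b (k + 1) - q| * |L| := by
            rw [← abs_mul, ← abs_mul]; exact abs_add_le _ _
        _ ≤ c * |T k - L| + |b k / b (k + 1) - q| * |L| := by gcongr
  exact tendsto_sub_nhds_zero_iff.1 this

theorem tendsto_div_add_of_tendsto_div_succ {a : ℕ → ℝ} {q : ℝ} (ha : ∀ n, a n ≠ 0)
    (h : Tendsto (fun n => a n / a (n + 1)) atTop (𝓝 q)) (d : ℕ) :
    Tendsto (fun n => a n / a (n + d)) atTop (𝓝 (q ^ d)) := by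
  induction d with
  | zero => simp [div_self (ha _)]
  | succ d ih =>
    rw [pow_succ]
    refine (ih.mul (h.comp (tendsto_add_atTop_nat d))).congr fun n => ?_
    simp only [Function.comp, ← add_assoc, div_mul_div_cancel₀ (ha (n + d))]

namespace FreeMagma

theorem len_pos {α : Type*} : ∀ x : FreeMagma α, 0 < x.len
  | of _ => Nat.one_pos
  | mul x _ => Nat.add_pos_left x.len_pos _

def toBinaryTree : FreeMagma Unit → BinaryTree Unit
  | of _ => .nil
  | mul x y => .node () x.toBinaryTree y.toBinaryTree

def ofBinaryTree : BinaryTree Unit → FreeMagma Unit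
  | .nil => of ()
  | .node _ l r => mul (ofBinaryTree l) (ofBinaryTree r)

theorem ofBinaryTree_toBinaryTree : ∀ x : FreeMagma Unit, ofBinaryTree x.toBinaryTree = x
  | of _ => rfl
  | mul x y => congrArg₂ mul x.ofBinaryTree_toBinaryTree y.ofBinaryTree_toBinaryTree

theorem toBinaryTree_ofBinaryTree : ∀ t : BinaryTree Unit, (ofBinaryTree t).toBinaryTree = t
  | .nil => rfl
  | .node () l r =>
    congrArg₂ (BinaryTree.node ()) (toBinaryTree_ofBinaryTree l) (toBinaryTree_ofBinaryTree r)

def equivBinaryTree : FreeMagma Unit ≃ BinaryTree Unit :=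
  ⟨toBinaryTree, ofBinaryTree, ofBinaryTree_toBinaryTree, toBinaryTree_ofBinaryTree⟩

theorem len_eq_numLeaves : ∀ x : FreeMagma Unit, x.len = (equivBinaryTree x).numLeaves
  | of _ => rfl
  | mul x y => congrArg₂ (· + ·) x.len_eq_numLeaves y.len_eq_numLeaves

theorem card_len_eq_succ (n : ℕ) :
    Nat.card {x : FreeMagma Unit // x.len = n + 1} = catalan n := by
  rw [← BinaryTree.treesOfNumNodesEq_card_eq_catalan, ← Nat.card_eq_finsetCard]
  refine Nat.card_congr (equivBinaryTree.subtypeEquiv fun x => ?_)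
  rw [len_eq_numLeaves, BinaryTree.numLeaves_eq_numNodes_succ, BinaryTree.mem_treesOfNumNodesEq,
    Nat.add_right_cancel_iff]

instance isEmpty_len_eq_zero {α : Type*} : IsEmpty {x : FreeMagma α // x.len = 0} :=
  ⟨fun x => x.1.len_pos.ne' x.2⟩

theorem card_len_eq_zero {α : Type*} : Nat.card {x : FreeMagma α // x.len = 0} = 0 :=
  Nat.card_of_isEmpty

instance finite_len_eq (n : ℕ) : Finite {x : FreeMagma Unit // x.len = n} := by
  cases n with
  | zero => infer_instance
  | succ n => exact Nat.finite_of_card_ne_zero (card_len_eq_succ n ▸ (catalan_pos n).ne')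

end FreeMagma

theorem cntLe_eq_sum_filter {α : Type*} [∀ m, Finite {x : FreeMagma α // x.len = m}]
    {X : Set (FreeMagma α)} {P : ℕ → Prop} [DecidablePred P] (hX : ∀ x, x ∈ X ↔ P x.len)
    (n : ℕ) :
    cntLe X n = ∑ m ∈ (range (n + 1)).filter P, Nat.card {x : FreeMagma α // x.len = m} := by
  rw [cntLe, ← Nat.card_congr (Equiv.sigmaSubtypeFiberEquivSubtype FreeMagma.len
    (q := (· ∈ (range (n + 1)).filter P)) fun x => ?_),
    Nat.card_sigma]
  · exact sum_coe_sort _ fun m => Nat.card {x : FreeMagma α // x.len = m}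
  · simp [hX, and_comm]

theorem cntLe_univ (n : ℕ) :
    cntLe (Set.univ : Set (FreeMagma Unit)) (n + 1) = ∑ m ∈ range (n + 1), catalan m := by
  rw [cntLe_eq_sum_filter (X := Set.univ) (P := fun _ => True)
    (fun _ => iff_of_true trivial trivial), filter_true, sum_range_succ',
    FreeMagma.card_len_eq_zero, add_zero]
  exact sum_congr rfl fun m _ => FreeMagma.card_len_eq_succ m

theorem filter_dvd_range_mul_add {p : ℕ} (hp : 0 < p) {r : ℕ} (hr : r < p) (k : ℕ) :
    (range (p * k + r + 1)).filter (p ∣ ·) =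
      (range (k + 1)).map ⟨(p * ·), mul_right_injective₀ hp.ne'⟩ := by
  ext m
  simp only [mem_filter, mem_range, Finset.mem_map, Function.Embedding.coeFn_mk]
  constructor
  · rintro ⟨hm, j, rfl⟩
    refine ⟨j, Nat.lt_of_mul_lt_mul_left (a := p) ?_, rfl⟩
    rw [mul_add, mul_one]; omega
  · rintro ⟨j, hj, rfl⟩
    exact ⟨Nat.lt_succ_of_le ((Nat.mul_le_mul_left p (Nat.lt_succ_iff.1 hj)).trans
      (Nat.le_add_right _ _)), dvd_mul_right p j⟩

theorem cntLe_dvd_len {p : ℕ} (hp : 0 < p) {r : ℕ} (hr : r < p) (k : ℕ) :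
    cntLe {x : FreeMagma Unit | p ∣ x.len} (p * k + r) =
      ∑ j ∈ range k, catalan (p * j + (p - 1)) := by
  rw [cntLe_eq_sum_filter (X := {x | p ∣ x.len}) (P := (p ∣ ·)) (fun _ => Iff.rfl),
    filter_dvd_range_mul_add hp hr, sum_map, sum_range_succ', Function.Embedding.coeFn_mk,
    mul_zero, FreeMagma.card_len_eq_zero, add_zero]
  refine sum_congr rfl fun j _ => ?_
  rw [← FreeMagma.card_len_eq_succ, mul_add, mul_one]
  congr! 3
  omega

theorem cntLe_dvd_len_div_cntLe_univ {p : ℕ} (hp : 0 < p) {r : ℕ} (hr : r < p) (k : ℕ) :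
    (cntLe {x : FreeMagma Unit | p ∣ x.len} (p * (k + 1) + r) : ℝ) /
        cntLe (Set.univ : Set (FreeMagma Unit)) (p * (k + 1) + r) =
      (∑ j ∈ range (k + 1), (catalan (p * j + (p - 1)) : ℝ)) / catalan (p * k + (p - 1)) *
        ((catalan (p * k + (p - 1)) : ℝ) / catalan (p * k + (p - 1) + r)) *
        ((∑ m ∈ range (p * k + (p - 1) + r + 1), (catalan m : ℝ)) /
          catalan (p * k + (p - 1) + r))⁻¹ := by
  rw [cntLe_dvd_len hp hr, show p * (k + 1) + r = p * k + (p - 1) + r + 1 by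
    rw [mul_add, mul_one]; omega, cntLe_univ, inv_div,
    div_mul_div_cancel₀ (catalan_cast_ne_zero _), div_mul_div_cancel₀ (catalan_cast_ne_zero _)]
  push_cast
  rfl

theorem tendsto_mul_add_atTop {p : ℕ} (hp : 0 < p) (c : ℕ) :
    Tendsto (fun k => p * k + c) atTop atTop :=
  tendsto_atTop_mono (fun k => (Nat.le_mul_of_pos_left k hp).trans (Nat.le_add_right _ c))
    tendsto_id

theorem stmt_13 (p r : ℕ) (hp : 0 < p) (hr : r < p) :
    Tendsto (fun k =>
        (cntLe {x : FreeMagma Unit | p ∣ x.len} (p * k + r) : ℝ) /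
          (cntLe (Set.univ : Set (FreeMagma Unit)) (p * k + r) : ℝ))
      atTop (nhds (3 / (4 ^ (r + 1) * (1 - 1 / 4 ^ p)))) := by
  have hC : ∀ n, (catalan n : ℝ) ≠ 0 := catalan_cast_ne_zero
  have hstep := tendsto_div_add_of_tendsto_div_succ hC tendsto_catalan_div_catalan_succ
  have hm := tendsto_mul_add_atTop hp (p - 1)
  have hA : Tendsto (fun k => (∑ j ∈ range (k + 1), (catalan (p * j + (p - 1)) : ℝ)) /
      catalan (p * k + (p - 1))) atTop (𝓝 (1 - (1 / 4) ^ p)⁻¹) :=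
    tendsto_sum_range_succ_div_self (fun _ => hC _)
      (by rw [abs_of_pos (by positivity)]; exact pow_lt_one₀ (by norm_num) (by norm_num) hp.ne')
      <| ((hstep p).comp hm).congr fun j => by
        simp only [Function.comp, mul_add, mul_one, add_right_comm]
  have hB := (hstep r).comp hm
  have hD := ((tendsto_sum_range_succ_div_self hC (by norm_num)
    tendsto_catalan_div_catalan_succ).comp ((tendsto_add_atTop_nat r).comp hm)).inv₀ (by norm_num)
  have hval : (1 - (1 / 4 : ℝ) ^ p)⁻¹ * (1 / 4) ^ r * ((1 - 1 / 4)⁻¹)⁻¹ =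
      3 / (4 ^ (r + 1) * (1 - 1 / 4 ^ p)) := by
    have h4p : (1 : ℝ) / 4 ^ p < 1 := by
      rw [div_lt_one (by positivity)]; exact one_lt_pow₀ (by norm_num) hp.ne'
    have : (1 : ℝ) - 1 / 4 ^ p ≠ 0 := sub_ne_zero.2 h4p.ne'
    simp only [div_pow, one_pow]
    field_simp
    ring
  rw [← tendsto_add_atTop_iff_nat 1, ← hval]
  exact ((hA.mul hB).mul hD).congr fun k => (cntLe_dvd_len_div_cntLe_univ hp hr k).symm
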